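/- arXiv:2306.10072 — 3 statements merged into one kernel-verified Lean document; each statement's English description precedes it below -/
import Mathlib

section
/- Let ξ_m = e^{2πi/m}, let X_1,...,X_n be i.i.d. standard Gaussians, let S_1,...,S_K ⊆ {1,...,n}, and suppose that all except at most a δ fraction of the pairs j ≠ k satisfy |S_j Δ S_k| ≥ (m/σ)² t. Let Σ_k = φ_k + σ·Σ_{i∈S_k} X_i with arbitrary angles φ_k ∈ [0,2π). Then E[|ξ_m^{Σ_1} + ... + ξ_m^{Σ_K}|²] ≤ K + 2δ·C(K,2) + 2(1−δ)·C(K,2)·e^{-2π²t}. -/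
open MeasureTheory ProbabilityTheory Real Finset
open scoped NNReal

/-!
Expanding the square, `‖∑ₖ exp (i θₖ)‖² = K + 2 ∑_{j < k} cos (θⱼ - θₖ)`. For `j < k` the random
part of `θⱼ - θₖ` is `2πσ/m` times `∑_{S_j} X - ∑_{S_k} X`, a centred Gaussian of variance
`|S_j Δ S_k|`, so its characteristic function gives
`E cos (θⱼ - θₖ) ≤ exp (-2π² (σ/m)² |S_j Δ S_k|)`. This is at most `exp (-2π² t)` for the pairs
with `|S_j Δ S_k| ≥ (m/σ)² t`, and at most `1` for the at most `δ C(K,2)` remaining pairs.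
-/

theorem Finset.sum_le_card_mul_add_card_filter_not_mul {α : Type*} (s : Finset α) (P : α → Prop)
    [DecidablePred P] {f : α → ℝ} {e : ℝ} (hf : ∀ x ∈ s, f x ≤ 1) (hP : ∀ x ∈ s, P x → f x ≤ e) :
    ∑ x ∈ s, f x ≤ #s * e + #{x ∈ s | ¬P x} * (1 - e) := by
  have hgood : ∑ x ∈ s with P x, f x ≤ #{x ∈ s | P x} * e := by
    simpa using sum_le_card_nsmul _ f e fun x hx ↦ hP x (mem_filter.1 hx).1 (mem_filter.1 hx).2
  have hbad : ∑ x ∈ s with ¬P x, f x ≤ #{x ∈ s | ¬P x} := by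
    simpa using sum_le_card_nsmul _ f 1 fun x hx ↦ hf x (mem_filter.1 hx).1
  rw [← sum_filter_add_sum_filter_not s P, ← card_filter_add_card_filter_not (s := s) P]
  push_cast
  linarith

theorem Finset.sum_sum_eq_sum_add_two_mul_sum_lt {ι R : Type*} [Fintype ι] [LinearOrder ι]
    [NonAssocSemiring R] (f : ι → ι → R) (hf : ∀ i j, f i j = f j i) :
    ∑ i, ∑ j, f i j = ∑ i, f i i + 2 * ∑ p : ι × ι with p.1 < p.2, f p.1 p.2 := by
  have hsplit (p : ι × ι) : f p.1 p.2 = (if p.1 = p.2 then f p.1 p.2 else 0)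
      + (if p.1 < p.2 then f p.1 p.2 else 0) + (if p.2 < p.1 then f p.1 p.2 else 0) := by
    rcases lt_trichotomy p.1 p.2 with h | h | h
    · simp [h, h.ne, h.not_gt]
    · simp [h]
    · simp [h, h.ne', h.not_gt]
  have hswap : ∑ p : ι × ι, (if p.2 < p.1 then f p.1 p.2 else 0)
      = ∑ p : ι × ι, (if p.1 < p.2 then f p.1 p.2 else 0) :=
    Fintype.sum_equiv (Equiv.prodComm ι ι) _ _ fun p ↦ by
      simp only [Equiv.prodComm_apply, Prod.fst_swap, Prod.snd_swap]
      rw [hf]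
      congr 1
  rw [← Fintype.sum_prod_type', Fintype.sum_congr _ _ hsplit, sum_add_distrib, sum_add_distrib,
    hswap, add_assoc, ← two_mul, sum_filter]
  congr 1
  rw [Fintype.sum_prod_type]
  simp

theorem norm_sum_cexp_mul_I_sq {ι : Type*} [Fintype ι] [LinearOrder ι] (θ : ι → ℝ) :
    ‖∑ k, Complex.exp (θ k * Complex.I)‖ ^ 2
      = Fintype.card ι + 2 * ∑ p : ι × ι with p.1 < p.2, cos (θ p.1 - θ p.2) := by
  have hterm (j k : ι) :
      (Complex.exp (θ j * Complex.I) * (starRingEnd ℂ) (Complex.exp (θ k * Complex.I))).re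
        = cos (θ j - θ k) := by
    rw [← Complex.exp_conj, map_mul, Complex.conj_ofReal, Complex.conj_I, ← Complex.exp_add,
      ← Complex.exp_ofReal_mul_I_re]
    push_cast
    ring_nf
  rw [← Complex.ofReal_re (_ ^ 2), Complex.ofReal_pow, ← Complex.mul_conj', map_sum, sum_mul_sum,
    Complex.re_sum]
  simp_rw [Complex.re_sum, hterm]
  rw [Finset.sum_sum_eq_sum_add_two_mul_sum_lt _ fun j k ↦ by rw [← cos_neg, neg_sub]]
  simp

theorem sum_ite_mem_sub_ite_mem_sq {ι : Type*} [Fintype ι] [DecidableEq ι] (A B : Finset ι) :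
    ∑ i, ((if i ∈ A then 1 else 0) - (if i ∈ B then 1 else 0) : ℝ) ^ 2 = #(symmDiff A B) := by
  calc _ = ∑ i, if i ∈ symmDiff A B then (1 : ℝ) else 0 := by
        refine sum_congr rfl fun i _ ↦ ?_
        by_cases hA : i ∈ A <;> by_cases hB : i ∈ B <;> simp [mem_symmDiff, hA, hB]
    _ = #(symmDiff A B) := by simp

theorem integral_cos_add_mul_gaussianReal (ψ a : ℝ) (v : ℝ≥0) :
    ∫ y, cos (ψ + a * y) ∂(gaussianReal 0 v) = cos ψ * exp (-(v * a ^ 2 / 2)) := by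
  have hint :
      Integrable (fun y : ℝ ↦ Complex.exp ((ψ + a * y : ℝ) * Complex.I)) (gaussianReal 0 v) :=
    Integrable.of_bound (by fun_prop) 1 (ae_of_all _ fun y ↦ (Complex.norm_exp_ofReal_mul_I _).le)
  calc ∫ y, cos (ψ + a * y) ∂(gaussianReal 0 v)
      = (∫ y, Complex.exp ((ψ + a * y : ℝ) * Complex.I) ∂(gaussianReal 0 v)).re := by
        simp_rw [← Complex.exp_ofReal_mul_I_re]
        exact integral_re hint
    _ = (Complex.exp (ψ * Complex.I) * charFun (gaussianReal 0 v) a).re := by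
        simp_rw [charFun_apply_real, ← integral_const_mul, ← Complex.exp_add]
        congr 2 with y
        push_cast
        ring_nf
    _ = cos ψ * exp (-(v * a ^ 2 / 2)) := by
      rw [charFun_gaussianReal, show Complex.exp (a * (0 : ℝ) * Complex.I - v * a ^ 2 / 2)
        = ((exp (-(v * a ^ 2 / 2)) : ℝ) : ℂ) by push_cast; ring_nf,
        Complex.re_mul_ofReal, Complex.exp_ofReal_mul_I_re]

section IndependentGaussians

variable {Ω : Type*} [MeasurableSpace Ω] {μ : Measure Ω} [IsProbabilityMeasure μ]

theorem map_sum_mul_eq_gaussianReal {ι : Type*} [Fintype ι] {X : ι → Ω → ℝ}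
    (hX_indep : iIndepFun X μ)
    (hX_dist : ∀ i, μ.map (X i) = gaussianReal 0 1) (c : ι → ℝ) :
    μ.map (fun ω ↦ ∑ i, c i * X i ω) = gaussianReal 0 (∑ i, c i ^ 2).toNNReal := by
  have hX_meas i : AEMeasurable (X i) μ :=
    aemeasurable_of_map_neZero (by rw [hX_dist i]; infer_instance)
  refine Measure.ext_of_charFun (funext fun t ↦ ?_)
  rw [(hX_indep.comp (fun i x ↦ c i * x) fun i ↦ measurable_const_mul _).charFun_map_fun_sum_eq_prod
    fun i ↦ (hX_meas i).const_mul _, prod_apply, charFun_gaussianReal,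
    Real.coe_toNNReal _ (sum_nonneg fun i _ ↦ sq_nonneg (c i))]
  push_cast
  simp only [sum_mul, sum_div, mul_zero, zero_mul, zero_sub, ← sum_neg_distrib, Complex.exp_sum]
  refine prod_congr rfl fun i _ ↦ ?_
  rw [charFun_map_mul_comp (hX_meas i), hX_dist, charFun_gaussianReal]
  push_cast
  ring_nf

theorem map_sum_sub_sum_eq_gaussianReal {ι : Type*} [Fintype ι] [DecidableEq ι]
    {X : ι → Ω → ℝ} (hX_indep : iIndepFun X μ) (hX_dist : ∀ i, μ.map (X i) = gaussianReal 0 1)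
    (A B : Finset ι) :
    μ.map (fun ω ↦ ∑ i ∈ A, X i ω - ∑ i ∈ B, X i ω) = gaussianReal 0 #(symmDiff A B) := by
  have hsum ω : ∑ i ∈ A, X i ω - ∑ i ∈ B, X i ω
      = ∑ i, ((if i ∈ A then 1 else 0) - (if i ∈ B then 1 else 0)) * X i ω := by
    simp only [sub_mul, ite_mul, one_mul, zero_mul, sum_sub_distrib, sum_ite_mem, univ_inter]
  simp_rw [hsum, map_sum_mul_eq_gaussianReal hX_indep hX_dist, sum_ite_mem_sub_ite_mem_sq,
    Real.toNNReal_natCast]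

theorem integral_cos_sub_noisy_phase_le {ι : Type*} [Fintype ι] [DecidableEq ι]
    {X : ι → Ω → ℝ} (hX_indep : iIndepFun X μ) (hX_dist : ∀ i, μ.map (X i) = gaussianReal 0 1)
    (m σ φ₁ φ₂ : ℝ) (A B : Finset ι) :
    ∫ ω, cos (2 * π * (φ₁ + σ * ∑ i ∈ A, X i ω) / m - 2 * π * (φ₂ + σ * ∑ i ∈ B, X i ω) / m) ∂μ
      ≤ exp (-2 * π ^ 2 * (σ / m) ^ 2 * #(symmDiff A B)) := by
  have hlaw := map_sum_sub_sum_eq_gaussianReal hX_indep hX_dist A B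
  have hY : AEMeasurable (fun ω ↦ ∑ i ∈ A, X i ω - ∑ i ∈ B, X i ω) μ :=
    aemeasurable_of_map_neZero (by rw [hlaw]; infer_instance)
  calc _ = ∫ y, cos (2 * π * (φ₁ - φ₂) / m + 2 * π * σ / m * y)
        ∂(μ.map fun ω ↦ ∑ i ∈ A, X i ω - ∑ i ∈ B, X i ω) := by
        rw [integral_map hY (by fun_prop)]
        congr with ω
        ring_nf
    _ = cos (2 * π * (φ₁ - φ₂) / m) * exp (-(#(symmDiff A B) * (2 * π * σ / m) ^ 2 / 2)) := by
        rw [hlaw, integral_cos_add_mul_gaussianReal]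
        norm_cast
    _ ≤ exp (-(#(symmDiff A B) * (2 * π * σ / m) ^ 2 / 2)) :=
        mul_le_of_le_one_left (exp_pos _).le (cos_le_one _)
    _ = _ := by ring_nf

theorem integral_cos_sub_noisy_phase_le_one {ι : Type*} [Fintype ι] [DecidableEq ι]
    {X : ι → Ω → ℝ} (hX_indep : iIndepFun X μ) (hX_dist : ∀ i, μ.map (X i) = gaussianReal 0 1)
    (m σ φ₁ φ₂ : ℝ) (A B : Finset ι) :
    ∫ ω, cos (2 * π * (φ₁ + σ * ∑ i ∈ A, X i ω) / m - 2 * π * (φ₂ + σ * ∑ i ∈ B, X i ω) / m) ∂μ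
      ≤ 1 := by
  refine (integral_cos_sub_noisy_phase_le hX_indep hX_dist m σ φ₁ φ₂ A B).trans
    (exp_le_one_iff.2 ?_)
  have : 0 ≤ π ^ 2 * (σ / m) ^ 2 * #(symmDiff A B) := by positivity
  linarith

theorem integral_cos_sub_noisy_phase_le_exp_of_le {ι : Type*} [Fintype ι] [DecidableEq ι]
    {X : ι → Ω → ℝ} (hX_indep : iIndepFun X μ) (hX_dist : ∀ i, μ.map (X i) = gaussianReal 0 1)
    {m σ t : ℝ} (hm : m ≠ 0) (hσ : σ ≠ 0) (φ₁ φ₂ : ℝ) {A B : Finset ι}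
    (hAB : (m / σ) ^ 2 * t ≤ #(symmDiff A B)) :
    ∫ ω, cos (2 * π * (φ₁ + σ * ∑ i ∈ A, X i ω) / m - 2 * π * (φ₂ + σ * ∑ i ∈ B, X i ω) / m) ∂μ
      ≤ exp (-2 * π ^ 2 * t) := by
  refine (integral_cos_sub_noisy_phase_le hX_indep hX_dist m σ φ₁ φ₂ A B).trans
    (exp_le_exp.2 ?_)
  have ht : t ≤ (σ / m) ^ 2 * #(symmDiff A B) :=
    calc t = (σ / m) ^ 2 * ((m / σ) ^ 2 * t) := by field_simp
      _ ≤ _ := by gcongr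
  nlinarith [pi_pos]

end IndependentGaussians

theorem expectation_sq_norm_sum_noisy_phases_general
    {Ω : Type*} [MeasurableSpace Ω] (μ : Measure Ω) [IsProbabilityMeasure μ]
    (n K : ℕ) (X : Fin n → Ω → ℝ)
    (hX_indep : iIndepFun X μ)
    (hX_dist : ∀ i, μ.map (X i) = gaussianReal 0 1)
    (m σ t δ : ℝ) (hm : 0 < m) (hσ : 0 < σ) (ht : 0 < t)
    (S : Fin K → Finset (Fin n)) (φ : Fin K → ℝ)
    (hpairs :
      ((Finset.univ.filter (fun p : Fin K × Fin K =>
          p.1 < p.2 ∧ ¬ ((m / σ) ^ 2 * t ≤ ((symmDiff (S p.1) (S p.2)).card : ℝ)))).card : ℝ)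
        ≤ δ * (K.choose 2)) :
    ∫ ω, (‖∑ k : Fin K,
          Complex.exp (2 * π * Complex.I *
            (φ k + σ * ∑ i ∈ S k, X i ω) / m)‖) ^ 2 ∂μ
      ≤ K + 2 * δ * (K.choose 2) + 2 * (1 - δ) * (K.choose 2) * Real.exp (-2 * π ^ 2 * t) := by
  have hX_meas i : AEMeasurable (X i) μ :=
    aemeasurable_of_map_neZero (by rw [hX_dist i]; infer_instance)
  set θ : Fin K → Ω → ℝ := fun k ω ↦ 2 * π * (φ k + σ * ∑ i ∈ S k, X i ω) / m
  have hnorm ω : ‖∑ k, Complex.exp (2 * π * Complex.I * (φ k + σ * ∑ i ∈ S k, X i ω) / m)‖ ^ 2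
      = Fintype.card (Fin K)
        + 2 * ∑ p : Fin K × Fin K with p.1 < p.2, cos (θ p.1 ω - θ p.2 ω) := by
    rw [← norm_sum_cexp_mul_I_sq (θ · ω)]
    refine congrArg (‖·‖ ^ 2) (sum_congr rfl fun k _ ↦ congrArg Complex.exp ?_)
    simp only [θ]
    push_cast
    ring
  have hint (p : Fin K × Fin K) : Integrable (fun ω ↦ cos (θ p.1 ω - θ p.2 ω)) μ :=
    Integrable.of_bound (by fun_prop) 1 (ae_of_all _ fun ω ↦ by simpa using abs_cos_le_one _)
  have hE : exp (-2 * π ^ 2 * t) ≤ 1 := exp_le_one_iff.2 (by nlinarith [pi_pos])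
  calc _ = K + 2 * ∑ p : Fin K × Fin K with p.1 < p.2, ∫ ω, cos (θ p.1 ω - θ p.2 ω) ∂μ := by
        simp_rw [hnorm]
        rw [integral_add (integrable_const _)
          ((integrable_finsetSum _ fun p _ ↦ hint p).const_mul 2), integral_const_mul,
          integral_finsetSum _ fun p _ ↦ hint p]
        simp
    _ ≤ K + 2 * (K.choose 2 * exp (-2 * π ^ 2 * t)
          + δ * K.choose 2 * (1 - exp (-2 * π ^ 2 * t))) := by
        grw [sum_le_card_mul_add_card_filter_not_mul _ _
          (fun p _ ↦ integral_cos_sub_noisy_phase_le_one hX_indep hX_dist _ _ _ _ _ _)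
          (fun p _ ↦ integral_cos_sub_noisy_phase_le_exp_of_le hX_indep hX_dist hm.ne' hσ.ne' _ _),
          filter_filter, hpairs, Fintype.card_product_filter_lt, Fintype.card_fin]
        linarith
    _ = _ := by ring

theorem expectation_sq_norm_sum_noisy_phases
    {Ω : Type*} [MeasurableSpace Ω] (μ : Measure Ω) [IsProbabilityMeasure μ]
    (n K : ℕ) (X : Fin n → Ω → ℝ)
    (hX_indep : iIndepFun X μ)
    (hX_meas : ∀ i, Measurable (X i))
    (hX_dist : ∀ i, μ.map (X i) = gaussianReal 0 1)
    (m σ t δ : ℝ) (hm : 0 < m) (hσ : 0 < σ) (ht : 0 < t)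
    (hδ0 : 0 ≤ δ) (hδ1 : δ ≤ 1)
    (S : Fin K → Finset (Fin n)) (φ : Fin K → ℝ)
    (hφ : ∀ k, φ k ∈ Set.Ico 0 (2 * π))
    (hpairs :
      ((Finset.univ.filter (fun p : Fin K × Fin K =>
          p.1 < p.2 ∧ ¬ ((m / σ) ^ 2 * t ≤ ((symmDiff (S p.1) (S p.2)).card : ℝ)))).card : ℝ)
        ≤ δ * (K.choose 2)) :
    ∫ ω, (‖∑ k : Fin K,
          Complex.exp (2 * π * Complex.I *
            (φ k + σ * ∑ i ∈ S k, X i ω) / m)‖) ^ 2 ∂μ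
      ≤ K + 2 * δ * (K.choose 2) + 2 * (1 - δ) * (K.choose 2) * Real.exp (-2 * π ^ 2 * t) :=
  expectation_sq_norm_sum_noisy_phases_general μ n K X hX_indep hX_dist m σ t δ hm hσ ht S φ hpairs
end

section
/- Let p and q be distinct odd primes each satisfying P⁺(p−1) > p^{2/3} and P⁺(q−1) > q^{2/3}, and let N = pq. Then a uniformly random x in (ℤ/Nℤ)* satisfies, with probability greater than 1 − N^{-1/3}, that its multiplicative order ω satisfies ω > N^{1/3} and ord_2(ω) < (log₂ ω)/2. -/
open Real

lemma cube_rt_lt {a b : ℕ} (hab : (a:ℝ) < (b:ℝ)^(2:ℝ)) :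
    (a:ℝ) ^ ((1:ℝ)/3) < (b:ℝ)^((2:ℝ)/3) := by
  have h1 : ((b:ℝ)^(2:ℝ))^((1:ℝ)/3) = (b:ℝ)^((2:ℝ)/3) := by
    rw [← Real.rpow_mul (Nat.cast_nonneg b)]
    norm_num
  calc (a:ℝ)^((1:ℝ)/3) < ((b:ℝ)^(2:ℝ))^((1:ℝ)/3) :=
        Real.rpow_lt_rpow (by positivity) hab (by norm_num)
    _ = (b:ℝ)^((2:ℝ)/3) := h1

-- r > q^{2/3}, q ≥ 3 ⇒ r ≥ 3 (so r odd prime)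
lemma two_lt_of_big {q r : ℕ} (hq : 3 ≤ q) (h : (q:ℝ)^((2:ℝ)/3) < r) : 2 < r := by
  have h2 : (2:ℝ) = (8:ℝ) ^ ((1:ℝ)/3) := by
    rw [show (8:ℝ) = (2:ℝ)^(3:ℝ) by norm_num, ← Real.rpow_mul (by norm_num)]
    norm_num
  have h8 : ((8:ℕ):ℝ) < (q:ℝ)^(2:ℝ) := by
    have : (3:ℝ) ≤ q := by exact_mod_cast hq
    rw [show (2:ℝ) = ((2:ℕ):ℝ) by norm_num, Real.rpow_natCast]
    push_cast
    nlinarith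
  have := cube_rt_lt (a := 8) (b := q) h8
  have : (2:ℝ) < r := by
    rw [h2]
    calc (8:ℝ)^((1:ℝ)/3) = ((8:ℕ):ℝ)^((1:ℝ)/3) := by norm_num
      _ < (q:ℝ)^((2:ℝ)/3) := this
      _ < r := h
  exact_mod_cast this

lemma pow2_bound {p r v : ℕ} (hp1 : 2 ≤ p) (hd : 2^v * r ∣ p - 1)
    (hrgt : (p:ℝ)^((2:ℝ)/3) < r) : ((2:ℝ)^v) < (p:ℝ)^((1:ℝ)/3) := by
  have hp0 : 0 < p - 1 := by omega
  have hle : 2^v * r ≤ p - 1 := Nat.le_of_dvd hp0 hd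
  have hleR : ((2:ℝ)^v) * r ≤ ((p:ℝ) - 1) := by
    have := (Nat.cast_le (α := ℝ)).mpr hle
    push_cast at this
    rw [Nat.cast_sub (by omega)] at this
    push_cast at this
    linarith
  have hpR : (1:ℝ) ≤ (p:ℝ) := by exact_mod_cast Nat.one_le_of_lt hp1
  have hsplit : (p:ℝ) = (p:ℝ)^((1:ℝ)/3) * (p:ℝ)^((2:ℝ)/3) := by
    rw [← Real.rpow_add (by linarith)]
    norm_num
  have h23 : (0:ℝ) < (p:ℝ)^((2:ℝ)/3) := by positivity
  have key : ((2:ℝ)^v) * ((p:ℝ)^((2:ℝ)/3)) < ((p:ℝ)^((1:ℝ)/3)) * ((p:ℝ)^((2:ℝ)/3)) := by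
    have h1 : ((2:ℝ)^v) * ((p:ℝ)^((2:ℝ)/3)) < ((2:ℝ)^v) * r := by
      have : (0:ℝ) < (2:ℝ)^v := by positivity
      nlinarith
    nlinarith [hsplit]
  exact lt_of_mul_lt_mul_right key h23.le

lemma key_lemma {p q rp r da db : ℕ}
    (hp : p.Prime) (hq : q.Prime) (hpodd : Odd p) (hplt : p < q)
    (hrp : rp.Prime) (hrpd : rp ∣ p - 1) (hrpgt : (p:ℝ)^((2:ℝ)/3) < rp)
    (hr : r.Prime) (hrd : r ∣ q - 1) (hrgt : (q:ℝ)^((2:ℝ)/3) < r)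
    (hda : da ∣ p - 1) (hdb : db ∣ q - 1) (hrdb : r ∣ db) :
    (((p*q : ℕ)):ℝ)^((1:ℝ)/3) < (Nat.lcm da db : ℝ) ∧
      (((Nat.lcm da db).factorization 2 : ℕ) : ℝ) < Real.logb 2 (Nat.lcm da db) / 2 := by
  have hp3 : 3 ≤ p := hp.two_le.lt_of_ne (by rintro rfl; exact ((by norm_num : ¬ Odd 2)) hpodd)
  have hq3 : 3 ≤ q := by omega
  have hp1 : 0 < p - 1 := by omega
  have hq1 : 0 < q - 1 := by omega
  have hda0 : da ≠ 0 := fun h => by simp [h] at hda; omega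
  have hdb0 : db ≠ 0 := fun h => by simp [h] at hdb; omega
  set w := Nat.lcm da db with hw
  have hw0 : w ≠ 0 := Nat.lcm_ne_zero hda0 hdb0
  have hrw : r ∣ w := hrdb.trans (Nat.dvd_lcm_right da db)
  -- r odd
  have hr2 : 2 < r := two_lt_of_big hq3 hrgt
  have hrodd : ¬ (2 ∣ r) := fun h => by
    have := (Nat.prime_dvd_prime_iff_eq Nat.prime_two hr).mp h; omega
  have hrp2 : 2 < rp := two_lt_of_big hp3 hrpgt
  have hrpodd : ¬ (2 ∣ rp) := fun h => by
    have := (Nat.prime_dvd_prime_iff_eq Nat.prime_two hrp).mp h; omega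
  -- size bound : N^{1/3} < q^{2/3} < r ≤ w
  have hNq : ((p*q : ℕ):ℝ) < (q:ℝ)^(2:ℝ) := by
    rw [show ((2:ℝ)) = ((2:ℕ):ℝ) by norm_num, Real.rpow_natCast]
    push_cast
    have h1 : (p:ℝ) < q := by exact_mod_cast hplt
    have h2 : (0:ℝ) < q := by positivity
    nlinarith
  have hrlew : (r:ℝ) ≤ (w:ℝ) := by
    exact_mod_cast Nat.le_of_dvd (Nat.pos_of_ne_zero hw0) hrw
  have hsize : ((p*q : ℕ):ℝ)^((1:ℝ)/3) < (w:ℝ) :=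
    lt_of_lt_of_le (lt_trans (cube_rt_lt hNq) hrgt) hrlew
  refine ⟨hsize, ?_⟩
  -- 2-adic part
  set v := w.factorization 2 with hv
  have hvmax : v = max (da.factorization 2) (db.factorization 2) := by
    rw [hv, hw, Nat.factorization_lcm hda0 hdb0, Finsupp.sup_apply]
  -- 2^v < q^{1/3}
  have h2v : ((2:ℝ)^v) < (q:ℝ)^((1:ℝ)/3) := by
    rcases max_choice (da.factorization 2) (db.factorization 2) with hc | hc
    · have h2d : 2 ^ (da.factorization 2) ∣ p - 1 := (Nat.ordProj_dvd da 2).trans hda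
      have hdvd : 2 ^ (da.factorization 2) * rp ∣ p - 1 :=
        Nat.Coprime.mul_dvd_of_dvd_of_dvd
          (((Nat.coprime_primes Nat.prime_two hrp).mpr (by omega)).pow_left _) h2d hrpd
      have hb := pow2_bound hp.two_le hdvd hrpgt
      rw [hvmax, hc]
      calc ((2:ℝ)^(da.factorization 2)) < (p:ℝ)^((1:ℝ)/3) := hb
        _ ≤ (q:ℝ)^((1:ℝ)/3) := by
            apply Real.rpow_le_rpow (by positivity) (by exact_mod_cast hplt.le) (by norm_num)
    · have h2d : 2 ^ (db.factorization 2) ∣ q - 1 := (Nat.ordProj_dvd db 2).trans hdb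
      have hdvd : 2 ^ (db.factorization 2) * r ∣ q - 1 :=
        Nat.Coprime.mul_dvd_of_dvd_of_dvd
          (((Nat.coprime_primes Nat.prime_two hr).mpr (by omega)).pow_left _) h2d hrd
      rw [hvmax, hc]
      exact pow2_bound hq.two_le hdvd hrgt
  -- 2^v * r ∣ w so w ≥ 2^v r
  have h2vw : 2^v ∣ w := Nat.ordProj_dvd w 2
  have hvrw : 2^v * r ∣ w :=
    Nat.Coprime.mul_dvd_of_dvd_of_dvd
      (((Nat.coprime_primes Nat.prime_two hr).mpr (by omega)).pow_left _) h2vw hrw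
  have hwge : ((2:ℝ)^v) * r ≤ (w:ℝ) := by
    exact_mod_cast Nat.le_of_dvd (Nat.pos_of_ne_zero hw0) hvrw
  -- logb computations
  have hq1R : (1:ℝ) < q := by exact_mod_cast hq3.trans_lt' (by norm_num)
  have hLq : (0:ℝ) < Real.logb 2 q := Real.logb_pos (by norm_num) hq1R
  have hlogr : ((2:ℝ)/3) * Real.logb 2 q < Real.logb 2 r := by
    calc ((2:ℝ)/3) * Real.logb 2 q = Real.logb 2 ((q:ℝ)^((2:ℝ)/3)) := by
          rw [Real.logb_rpow_eq_mul_logb_of_pos (by linarith)]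
      _ < Real.logb 2 r := Real.logb_lt_logb (by norm_num) (by positivity) hrgt
  have hvlt : (v:ℝ) < (1/3) * Real.logb 2 q := by
    have := Real.logb_lt_logb (b := 2) (by norm_num) (x := (2:ℝ)^v) (by positivity) h2v
    rw [show ((2:ℝ)^v) = (2:ℝ)^((v:ℕ):ℝ) by rw [Real.rpow_natCast]] at this
    rw [Real.logb_rpow (by norm_num) (by norm_num)] at this
    rw [Real.logb_rpow_eq_mul_logb_of_pos (by linarith)] at this
    linarith
  have hlogw : (v:ℝ) + Real.logb 2 r ≤ Real.logb 2 w := by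
    have h1 : Real.logb 2 (((2:ℝ)^v) * r) ≤ Real.logb 2 w :=
      Real.logb_le_logb_of_le (by norm_num) (by positivity) hwge
    rw [Real.logb_mul (by positivity) (by positivity)] at h1
    rw [show ((2:ℝ)^v) = (2:ℝ)^((v:ℕ):ℝ) by rw [Real.rpow_natCast],
      Real.logb_rpow (by norm_num) (by norm_num)] at h1
    exact h1
  have : 2 * (v:ℝ) < Real.logb 2 w := by
    have h23 : (1/3 : ℝ) * Real.logb 2 q < (2/3 : ℝ) * Real.logb 2 q := by linarith
    linarith
  linarith

open Classical in
lemma count_pow_le {q m : ℕ} [Fact q.Prime] (hm0 : 0 < m) :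
    Nat.card {b : (ZMod q)ˣ // b ^ m = 1} ≤ m := by
  classical
  rw [Nat.card_eq_fintype_card, Fintype.card_subtype]
  exact IsCyclic.card_pow_eq_one_le hm0

lemma count_good {q r m : ℕ} [Fact q.Prime] (hq : q.Prime) (hr : r.Prime)
    (hrm : r * m = q - 1) (hmr : m < r) (hm0 : 0 < m) :
    (q - 1) - m ≤ Nat.card {b : (ZMod q)ˣ // r ∣ orderOf b} := by
  classical
  haveI : NeZero q := NeZero.of_pos hq.pos
  have hcard : Fintype.card (ZMod q)ˣ = q - 1 := by
    rw [ZMod.card_units_eq_totient, Nat.totient_prime hq]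
  -- bad set is inside m-th roots of 1
  have hsub : ∀ b : (ZMod q)ˣ, ¬ r ∣ orderOf b → b ^ m = 1 := by
    intro b hb
    have hdvd : orderOf b ∣ q - 1 := hcard ▸ orderOf_dvd_card
    rw [← hrm] at hdvd
    have hcop : (orderOf b).Coprime r :=
      ((Nat.Prime.coprime_iff_not_dvd hr).mpr hb).symm
    exact orderOf_dvd_iff_pow_eq_one.mp (hcop.dvd_of_dvd_mul_left hdvd)
  have hbadle : Nat.card {b : (ZMod q)ˣ // ¬ r ∣ orderOf b} ≤ m := by
    calc Nat.card {b : (ZMod q)ˣ // ¬ r ∣ orderOf b}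
        ≤ Nat.card {b : (ZMod q)ˣ // b ^ m = 1} := by
          rw [Nat.card_eq_fintype_card, Nat.card_eq_fintype_card]
          exact Fintype.card_subtype_mono _ _ hsub
      _ ≤ m := count_pow_le hm0
  have hcompl : Fintype.card {b : (ZMod q)ˣ // ¬ r ∣ orderOf b}
      = Fintype.card (ZMod q)ˣ - Fintype.card {b : (ZMod q)ˣ // r ∣ orderOf b} :=
    Fintype.card_subtype_compl _
  have hle : Fintype.card {b : (ZMod q)ˣ // r ∣ orderOf b} ≤ q - 1 :=
    hcard ▸ Fintype.card_subtype_le _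
  rw [Nat.card_eq_fintype_card] at hbadle ⊢
  omega

lemma arith_final (A B M ε : ℝ) (hA : 0 < A) (h : M < ε * B) :
    (1 - ε) * (A * B) < A * (B - M) := by nlinarith

theorem aux_main (p q N : ℕ)
    (hp : p.Prime) (hq : q.Prime) (hplt : p < q) (hpodd : Odd p)
    (hN : N = p * q)
    (hpF : ∃ r : ℕ, r.Prime ∧ r ∣ p - 1 ∧ (p : ℝ) ^ ((2 : ℝ) / 3) < (r : ℝ))
    (hqF : ∃ r : ℕ, r.Prime ∧ r ∣ q - 1 ∧ (q : ℝ) ^ ((2 : ℝ) / 3) < (r : ℝ)) :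
    (1 - (N : ℝ) ^ (-(1 : ℝ) / 3)) * Nat.card (ZMod N)ˣ
      < (Nat.card {x : (ZMod N)ˣ //
          (N : ℝ) ^ ((1 : ℝ) / 3) < (orderOf x : ℝ) ∧
          ((orderOf x).factorization 2 : ℝ) < Real.logb 2 (orderOf x) / 2} : ℝ) := by
  classical
  subst hN
  haveI : Fact p.Prime := ⟨hp⟩
  haveI : Fact q.Prime := ⟨hq⟩
  obtain ⟨rp, hrp, hrpd, hrpgt⟩ := hpF
  obtain ⟨r, hr, hrd, hrgt⟩ := hqF
  have hp3 : 3 ≤ p := hp.two_le.lt_of_ne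
    (by rintro rfl; exact (by norm_num : ¬ Odd 2) hpodd)
  have hq3 : 3 ≤ q := by omega
  have hco : Nat.Coprime p q := (Nat.coprime_primes hp hq).mpr (Nat.ne_of_lt hplt)
  haveI : NeZero (p * q) := ⟨by positivity⟩
  -- the CRT multiplicative equivalence
  let e : (ZMod (p*q))ˣ ≃* (ZMod p)ˣ × (ZMod q)ˣ :=
    (Units.mapEquiv (ZMod.chineseRemainder hco).toMulEquiv).trans MulEquiv.prodUnits
  -- group cardinality
  have hG : (Nat.card (ZMod (p*q))ˣ : ℝ) = ((p-1 : ℕ) : ℝ) * ((q-1 : ℕ) : ℝ) := by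
    rw [Nat.card_eq_fintype_card, ZMod.card_units_eq_totient, Nat.totient_mul hco,
      Nat.totient_prime hp, Nat.totient_prime hq]
    push_cast
    ring
  -- m and basic facts
  set m : ℕ := (q - 1) / r with hm
  have hrm : r * m = q - 1 := Nat.mul_div_cancel' hrd
  have hq1 : 0 < q - 1 := by omega
  have hm0 : 0 < m := by
    rcases Nat.eq_zero_or_pos m with h | h
    · rw [h, mul_zero] at hrm; omega
    · exact h
  have hqr2 : (q:ℝ) < (r:ℝ)^(2:ℝ) := by
    have h1 : ((q:ℝ)^((2:ℝ)/3))^(2:ℝ) < (r:ℝ)^(2:ℝ) :=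
      Real.rpow_lt_rpow (by positivity) hrgt (by norm_num)
    have h2 : ((q:ℝ)^((2:ℝ)/3))^(2:ℝ) = (q:ℝ)^((4:ℝ)/3) := by
      rw [← Real.rpow_mul (Nat.cast_nonneg q)]; norm_num
    have h3 : (q:ℝ) ≤ (q:ℝ)^((4:ℝ)/3) := by
      calc (q:ℝ) = (q:ℝ)^(1:ℝ) := (Real.rpow_one _).symm
        _ ≤ (q:ℝ)^((4:ℝ)/3) := by
          apply Real.rpow_le_rpow_of_exponent_le (by exact_mod_cast by omega : (1:ℝ) ≤ q)
          norm_num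
    linarith [h2 ▸ h1]
  have hmr : m < r := by
    have hq_lt : q - 1 < r * r := by
      have : (q:ℝ) < (r:ℝ) * r := by
        have h := hqr2
        rw [show ((2:ℝ)) = ((2:ℕ):ℝ) by norm_num, Real.rpow_natCast, pow_two] at h
        exact h
      have hq_lt_rr : q < r * r := by exact_mod_cast this
      omega
    rw [← hrm] at hq_lt
    exact Nat.lt_of_mul_lt_mul_left (by omega : r * m < r * r)
  -- transfer to product group
  have hqm : ((q-1:ℕ):ℝ) = (m:ℝ) * r := by rw [← hrm]; push_cast; ring
  have horder : ∀ x : (ZMod (p*q))ˣ, orderOf x = orderOf (e x) :=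
    fun x => (MulEquiv.orderOf_eq e x).symm
  set P : ℕ → Prop := fun n =>
    ((p*q : ℕ) : ℝ) ^ ((1 : ℝ) / 3) < (n : ℝ) ∧
      ((n.factorization 2 : ℕ) : ℝ) < Real.logb 2 n / 2 with hP
  show (1 - ((p*q : ℕ):ℝ) ^ (-(1:ℝ)/3)) * (Nat.card (ZMod (p*q))ˣ : ℝ)
      < (Nat.card {x : (ZMod (p*q))ˣ // P (orderOf x)} : ℝ)
  have hcount1 : Nat.card {x : (ZMod (p*q))ˣ // P (orderOf x)}
      = Nat.card {y : (ZMod p)ˣ × (ZMod q)ˣ // P (orderOf y)} :=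
    Nat.card_congr (Equiv.subtypeEquiv e.toEquiv (fun x => by rw [horder x]; rfl))
  -- key: r ∣ orderOf y.2 → P (orderOf y)
  have hkey : ∀ y : (ZMod p)ˣ × (ZMod q)ˣ, r ∣ orderOf y.2 → P (orderOf y) := by
    intro y hy
    have hda : orderOf y.1 ∣ p - 1 := by
      have : orderOf y.1 ∣ Fintype.card (ZMod p)ˣ := orderOf_dvd_card
      rwa [ZMod.card_units_eq_totient, Nat.totient_prime hp] at this
    have hdb : orderOf y.2 ∣ q - 1 := by
      have : orderOf y.2 ∣ Fintype.card (ZMod q)ˣ := orderOf_dvd_card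
      rwa [ZMod.card_units_eq_totient, Nat.totient_prime hq] at this
    have := key_lemma hp hq hpodd hplt hrp hrpd hrpgt hr hrd hrgt hda hdb hy
    rw [hP]
    dsimp only
    rw [Prod.orderOf]
    exact this
  have hcount2 : Nat.card {y : (ZMod p)ˣ × (ZMod q)ˣ // r ∣ orderOf y.2}
      ≤ Nat.card {y : (ZMod p)ˣ × (ZMod q)ˣ // P (orderOf y)} := by
    rw [Nat.card_eq_fintype_card, Nat.card_eq_fintype_card]
    exact Fintype.card_subtype_mono _ _ hkey
  have hcount3 : Nat.card {y : (ZMod p)ˣ × (ZMod q)ˣ // r ∣ orderOf y.2}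
      = (p - 1) * Nat.card {b : (ZMod q)ˣ // r ∣ orderOf b} := by
    have e2 : {y : (ZMod p)ˣ × (ZMod q)ˣ // r ∣ orderOf y.2}
        ≃ (ZMod p)ˣ × {b : (ZMod q)ˣ // r ∣ orderOf b} :=
      { toFun := fun y => (y.1.1, ⟨y.1.2, y.2⟩)
        invFun := fun z => ⟨(z.1, z.2.1), z.2.2⟩
        left_inv := fun y => rfl
        right_inv := fun z => rfl }
    rw [Nat.card_congr e2, Nat.card_prod, Nat.card_eq_fintype_card (α := (ZMod p)ˣ),
      ZMod.card_units_eq_totient, Nat.totient_prime hp]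
  have hgoodq : (q - 1) - m ≤ Nat.card {b : (ZMod q)ˣ // r ∣ orderOf b} :=
    count_good hq hr hrm hmr hm0
  -- final inequality
  have hS : ((p - 1) * ((q - 1) - m) : ℕ) ≤
      Nat.card {x : (ZMod (p*q))ˣ // P (orderOf x)} := by
    rw [hcount1]
    calc ((p - 1) * ((q - 1) - m) : ℕ)
        ≤ (p - 1) * Nat.card {b : (ZMod q)ˣ // r ∣ orderOf b} :=
          Nat.mul_le_mul_left _ hgoodq
      _ = Nat.card {y : (ZMod p)ˣ × (ZMod q)ˣ // r ∣ orderOf y.2} := hcount3.symm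
      _ ≤ _ := hcount2
  -- now pure real arithmetic
  have hmlt : (m : ℝ) < ((p*q : ℕ):ℝ) ^ (-(1:ℝ)/3) * ((q-1 : ℕ) : ℝ) := by
    have hNpos : (0:ℝ) < ((p*q : ℕ):ℝ) := by positivity
    have hNr : ((p*q : ℕ):ℝ) ^ ((1:ℝ)/3) < r := by
      have hNq : ((p*q : ℕ):ℝ) < (q:ℝ)^(2:ℝ) := by
        rw [show ((2:ℝ)) = ((2:ℕ):ℝ) by norm_num, Real.rpow_natCast]
        push_cast
        have h1 : (p:ℝ) < q := by exact_mod_cast hplt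
        have h2 : (0:ℝ) < q := by positivity
        nlinarith
      exact lt_trans (cube_rt_lt hNq) hrgt
    have heq : ((p*q : ℕ):ℝ) ^ (-(1:ℝ)/3) = (((p*q : ℕ):ℝ) ^ ((1:ℝ)/3))⁻¹ := by
      rw [neg_div, Real.rpow_neg hNpos.le]
    rw [heq, hqm]
    have h13 : (0:ℝ) < ((p*q : ℕ):ℝ) ^ ((1:ℝ)/3) := by positivity
    rw [inv_mul_eq_div, lt_div_iff₀ h13]
    have hm0R : (0:ℝ) < m := by exact_mod_cast hm0
    nlinarith
  have hsub : ((((q - 1) - m : ℕ)) : ℝ) = ((q-1:ℕ):ℝ) - (m:ℝ) := by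
    have : m ≤ q - 1 := by nlinarith [hrm, hr.two_le]
    exact Nat.cast_sub this
  have hp1R : (0:ℝ) < ((p-1:ℕ):ℝ) := by
    have : 0 < p - 1 := by omega
    exact_mod_cast this
  have hfinal : (1 - ((p*q : ℕ):ℝ) ^ (-(1:ℝ)/3)) * (Nat.card (ZMod (p*q))ˣ : ℝ)
      < (((p - 1) * ((q - 1) - m) : ℕ) : ℝ) := by
    rw [hG]
    have hcast : (((p - 1) * ((q - 1) - m) : ℕ) : ℝ)
        = ((p-1:ℕ):ℝ) * (((q-1:ℕ):ℝ) - (m:ℝ)) := by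
      rw [Nat.cast_mul, hsub]
    rw [hcast]
    exact arith_final _ _ _ _ hp1R hmlt
  have hSR : (((p - 1) * ((q - 1) - m) : ℕ) : ℝ)
      ≤ (Nat.card {x : (ZMod (p*q))ˣ // P (orderOf x)} : ℝ) := Nat.cast_le.mpr hS
  exact lt_of_lt_of_le hfinal hSR

theorem random_element_large_order (p q N : ℕ)
    (hp : p.Prime) (hq : q.Prime) (hpq : p ≠ q) (hpodd : Odd p) (hqodd : Odd q)
    (hN : N = p * q)
    (hpF : ∃ r : ℕ, r.Prime ∧ r ∣ p - 1 ∧ (p : ℝ) ^ ((2 : ℝ) / 3) < (r : ℝ))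
    (hqF : ∃ r : ℕ, r.Prime ∧ r ∣ q - 1 ∧ (q : ℝ) ^ ((2 : ℝ) / 3) < (r : ℝ)) :
    (1 - (N : ℝ) ^ (-(1 : ℝ) / 3)) * Nat.card (ZMod N)ˣ
      < (Nat.card {x : (ZMod N)ˣ //
          (N : ℝ) ^ ((1 : ℝ) / 3) < (orderOf x : ℝ) ∧
          ((orderOf x).factorization 2 : ℝ) < Real.logb 2 (orderOf x) / 2} : ℝ) := by
  rcases lt_or_gt_of_ne hpq with h | h
  · exact aux_main p q N hp hq h hpodd hN hpF hqF
  · exact aux_main q p N hq hp h hqodd (by rw [hN, mul_comm]) hqF hpF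
end

section
/- There is a constant C such that for every integer d ≥ 3, d/φ(d) ≤ C·log(log d), where φ is Euler's totient function and log is the natural logarithm. -/
/-!
Since `d / φ d = ∏_{p ∣ d} (1 - 1/p)⁻¹`, we have `log (d / φ d) ≤ ∑_{p ∣ d} 1/(p - 1)`. Take
`y = ⌈log d⌉`. The prime factors `p ≤ y` contribute at most
`∑_{p ≤ y} 1/(p - 1) = log log y + O(1)`: this is Mertens' second theorem, obtained by summation by parts from Mertens' first theorem
`∑_{p ≤ n} log p / p ≤ log n + log 4`, which in turn follows from Legendre's formula for `n!` and
Chebyshev's bound `θ(n) ≤ n log 4`. The product of the prime factors `p > y` divides `d`, so there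
are at most `log d / log (y + 1) ≤ y` of them and they contribute at most `1`. Hence
`d / φ d ≤ e⁹ log y = O(log log d)`.
-/

open Finset Real
open scoped Nat
open Nat (primesLE)

lemma Nat.div_le_factorization_factorial {p : ℕ} (hp : p.Prime) (n : ℕ) :
    n / p ≤ (n !).factorization p := by
  rw [Nat.factorization_factorial hp (Nat.lt_add_of_pos_right two_pos)]
  simpa using single_le_sum (f := fun i => n / p ^ i) (fun _ _ => Nat.zero_le _)
    (by simp : 1 ∈ Ico 1 (Nat.log p n + 2))

lemma log_factorial_eq_sum_primesLE (n : ℕ) :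
    log (n ! : ℝ) = ∑ p ∈ primesLE n, ((n !).factorization p : ℝ) * log p := by
  refine (log_nat_eq_sum_factorization _).trans (Finsupp.sum_of_support_subset _ ?_ _ (by simp))
  intro p hp
  rw [Nat.support_factorization, Nat.mem_primeFactors] at hp
  exact Nat.mem_primesLE.mpr ⟨(hp.1.dvd_factorial).mp hp.2.1, hp.1⟩

theorem sum_primesLE_log_div_le (n : ℕ) :
    ∑ p ∈ primesLE n, log p / p ≤ log n + log 4 := by
  rcases n.eq_zero_or_pos with rfl | hn
  · simp [Nat.primesLE_zero, log_nonneg]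
  have hterm : ∀ p ∈ primesLE n, n * (log p / p) ≤ ((n !).factorization p : ℝ) * log p + log p := by
    intro p hp
    have hp := Nat.prime_of_mem_primesLE hp
    have hdiv : (n : ℝ) / p ≤ (n / p : ℕ) + 1 := by
      rw [← Nat.floor_div_eq_div (K := ℝ)]
      exact (Nat.lt_floor_add_one _).le
    calc (n : ℝ) * (log p / p) = n / p * log p := by ring
      _ ≤ ((n / p : ℕ) + 1) * log p := by gcongr
      _ ≤ ((n !).factorization p + 1) * log p := by
        gcongr; exact Nat.div_le_factorization_factorial hp n
      _ = _ := by ring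
  have hfact : log (n ! : ℝ) ≤ n * log n := by
    rw [← log_pow, ← Nat.cast_pow]
    exact log_le_log (by positivity) (by exact_mod_cast Nat.factorial_le_pow n)
  have htheta : ∑ p ∈ primesLE n, log p ≤ n * log 4 := by
    rw [← Chebyshev.theta_eq_sum_primesLE_log, mul_comm]
    exact Chebyshev.theta_le_log4_mul_x n.cast_nonneg
  refine le_of_mul_le_mul_left ?_ (Nat.cast_pos.mpr hn)
  calc (n : ℝ) * ∑ p ∈ primesLE n, log p / p
      ≤ ∑ p ∈ primesLE n, (((n !).factorization p : ℝ) * log p + log p) := by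
        rw [mul_sum]; exact sum_le_sum hterm
    _ = log (n ! : ℝ) + ∑ p ∈ primesLE n, log p := by
        rw [sum_add_distrib, log_factorial_eq_sum_primesLE]
    _ ≤ n * (log n + log 4) := by linarith

lemma sum_primesLE_inv_eq (n : ℕ) :
    ∑ p ∈ primesLE n, (p : ℝ)⁻¹ =
      (log n)⁻¹ * ∑ p ∈ primesLE n, log p / p
        + ∑ i ∈ range n, ((log i)⁻¹ - (log (i + 1))⁻¹) * ∑ p ∈ primesLE i, log p / p := by
  set g : ℕ → ℝ := fun i => if i.Prime then log i / i else 0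
  have hS : ∀ m, ∑ p ∈ primesLE m, log p / p = ∑ i ∈ range (m + 1), g i := fun m => by
    rw [Nat.primesLE_eq_filter_range, sum_filter]
  have hlhs : ∑ p ∈ primesLE n, (p : ℝ)⁻¹ = ∑ i ∈ range (n + 1), (log i)⁻¹ • g i := by
    rw [Nat.primesLE_eq_filter_range, sum_filter]
    refine sum_congr rfl fun i _ => ?_
    by_cases hi : i.Prime
    · have : 0 < log i := log_pos (by exact_mod_cast hi.one_lt)
      simp only [g, if_pos hi, smul_eq_mul]
      field_simp
    · simp [g, hi]
  rw [hlhs, sum_range_by_parts, hS, add_tsub_cancel_right, sub_eq_add_neg, ← sum_neg_distrib]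
  simp only [hS, smul_eq_mul, Nat.cast_add, Nat.cast_one, ← neg_mul, neg_sub]

lemma inv_log_sub_inv_log_mul_le {a b c s : ℝ} (ha : 1 < a) (hab : a ≤ b) (hs : s ≤ log a + c) :
    ((log a)⁻¹ - (log b)⁻¹) * s ≤
      (log (log b) - c * (log b)⁻¹) - (log (log a) - c * (log a)⁻¹) := by
  have hla : 0 < log a := log_pos ha
  have hlb : 0 < log b := hla.trans_le (log_le_log (by linarith) hab)
  have hΔ : 0 ≤ (log a)⁻¹ - (log b)⁻¹ :=
    sub_nonneg.mpr (inv_anti₀ hla (log_le_log (by linarith) hab))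
  have hlog : 1 - log a / log b ≤ log (log b) - log (log a) := by
    simpa [log_div hlb.ne' hla.ne'] using one_sub_inv_le_log_of_pos (div_pos hlb hla)
  calc ((log a)⁻¹ - (log b)⁻¹) * s ≤ ((log a)⁻¹ - (log b)⁻¹) * (log a + c) := by gcongr
    _ = (1 - log a / log b) + c * ((log a)⁻¹ - (log b)⁻¹) := by field_simp
    _ ≤ _ := by linarith

theorem sum_primesLE_inv_le {n : ℕ} (hn : 2 ≤ n) :
    ∑ p ∈ primesLE n, (p : ℝ)⁻¹ ≤ log (log n) + 6 := by
  set S : ℕ → ℝ := fun i => ∑ p ∈ primesLE i, log p / p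
  -- the summation-by-parts terms are dominated by the increments of `Φ`
  set Φ : ℝ → ℝ := fun x => log (log x) - log 4 * (log x)⁻¹
  have hsum : ∑ i ∈ range n, ((log i)⁻¹ - (log (i + 1))⁻¹) * S i ≤ Φ n - Φ 2 := by
    rw [range_eq_Ico, ← sum_Ico_consecutive _ (Nat.zero_le 2) hn]
    have hsmall : ∑ i ∈ Ico (0 : ℕ) 2, ((log (i : ℝ))⁻¹ - (log ((i : ℝ) + 1))⁻¹) * S i = 0 := by
      simp [S, sum_range_succ, Nat.primesLE_zero, Nat.primesLE_one]
    have htele : ∑ i ∈ Ico 2 n, (Φ (i + 1) - Φ i) = Φ n - Φ 2 := by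
      simpa using sum_Ico_sub (fun i : ℕ => Φ i) hn
    rw [hsmall, zero_add, ← htele]
    refine sum_le_sum fun i hi => inv_log_sub_inv_log_mul_le ?_ (by linarith)
      (sum_primesLE_log_div_le i)
    exact_mod_cast (mem_Ico.mp hi).1
  have hlog2 : 1 / 2 < log 2 := by linarith [log_two_gt_d9]
  have hlogn : log 2 ≤ log n := log_le_log two_pos (by exact_mod_cast hn)
  have hlogn0 : 0 < log (n : ℝ) := by linarith
  have hfirst : (log n)⁻¹ * S n ≤ 3 := by
    have : log 4 / log n ≤ 2 := by
      rw [div_le_iff₀ hlogn0, log_four_eq]; linarith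
    calc (log n)⁻¹ * S n ≤ (log n)⁻¹ * (log n + log 4) := by
          gcongr; exact sum_primesLE_log_div_le n
      _ = 1 + log 4 / log n := by field_simp
      _ ≤ 3 := by linarith
  have hΦn : Φ n ≤ log (log n) := by
    have : 0 ≤ log 4 * (log n)⁻¹ := by positivity
    simp only [Φ]; linarith
  have hΦ2 : -Φ 2 ≤ 3 := by
    have h := one_sub_inv_le_log_of_pos (log_pos one_lt_two)
    have : (log 2)⁻¹ < 2 := by rw [inv_lt_comm₀ (by positivity) two_pos]; linarith
    have : Φ 2 = log (log 2) - 2 := by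
      simp only [Φ, log_four_eq, mul_assoc, mul_inv_cancel₀ (log_pos one_lt_two).ne', mul_one]
    linarith
  rw [sum_primesLE_inv_eq]
  linarith

lemma inv_sub_one_le_inv_add_two_mul_inv_sq {x : ℝ} (hx : 2 ≤ x) :
    (x - 1)⁻¹ ≤ x⁻¹ + 2 * (x ^ 2)⁻¹ := by
  have h1 : 0 < x - 1 := by linarith
  rw [inv_le_iff_one_le_mul₀ h1]
  field_simp
  nlinarith

theorem sum_primesLE_inv_sub_one_le {n : ℕ} (hn : 2 ≤ n) :
    ∑ p ∈ primesLE n, ((p : ℝ) - 1)⁻¹ ≤ log (log n) + 8 := by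
  have hsq : ∑ p ∈ primesLE n, ((p : ℝ) ^ 2)⁻¹ ≤ 1 := by
    calc ∑ p ∈ primesLE n, ((p : ℝ) ^ 2)⁻¹ ≤ ∑ i ∈ Ioo 1 (n + 1), ((i : ℝ) ^ 2)⁻¹ := by
          refine sum_le_sum_of_subset_of_nonneg (fun p hp => ?_) (fun _ _ _ => by positivity)
          have := Nat.mem_primesLE.mp hp
          exact mem_Ioo.mpr ⟨this.2.one_lt, Nat.lt_succ_of_le this.1⟩
      _ ≤ 2 / ((1 : ℕ) + 1) := sum_Ioo_inv_sq_le 1 (n + 1)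
      _ = 1 := by norm_num
  calc ∑ p ∈ primesLE n, ((p : ℝ) - 1)⁻¹
      ≤ ∑ p ∈ primesLE n, ((p : ℝ)⁻¹ + 2 * ((p : ℝ) ^ 2)⁻¹) :=
        sum_le_sum fun p hp => inv_sub_one_le_inv_add_two_mul_inv_sq
          (by exact_mod_cast Nat.two_le_of_mem_primesLE hp)
    _ = ∑ p ∈ primesLE n, (p : ℝ)⁻¹ + 2 * ∑ p ∈ primesLE n, ((p : ℝ) ^ 2)⁻¹ := by
        rw [sum_add_distrib, mul_sum]
    _ ≤ log (log n) + 8 := by linarith [sum_primesLE_inv_le hn]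

lemma log_div_totient_le_sum_primeFactors (d : ℕ) :
    log (d / d.totient) ≤ ∑ p ∈ d.primeFactors, ((p : ℝ) - 1)⁻¹ := by
  rcases eq_or_ne d 0 with rfl | hd
  · simp
  have hφ : (d.totient : ℝ) = d * ∏ p ∈ d.primeFactors, (1 - (p : ℝ)⁻¹) := by
    simpa using congrArg (Rat.cast : ℚ → ℝ) (Nat.totient_eq_mul_prod_factors d)
  have hp {p : ℕ} (hp : p ∈ d.primeFactors) : 1 < (p : ℝ) := by
    exact_mod_cast (Nat.prime_of_mem_primeFactors hp).one_lt
  have hfactor {p : ℕ} (h : p ∈ d.primeFactors) : 0 < 1 - (p : ℝ)⁻¹ :=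
    sub_pos.mpr (inv_lt_one_of_one_lt₀ (hp h))
  rw [hφ, div_mul_cancel_left₀ (by exact_mod_cast hd), ← prod_inv_distrib,
    log_prod fun p h => (inv_pos.mpr (hfactor h)).ne']
  refine sum_le_sum fun p h => (log_le_sub_one_of_pos (inv_pos.mpr (hfactor h))).trans_eq ?_
  have hp0 : (p : ℝ) ≠ 0 := by linarith [hp h]
  have hp1 : (p : ℝ) - 1 ≠ 0 := by linarith [hp h]
  have : 1 - (p : ℝ)⁻¹ = (p - 1) / p := by field_simp
  rw [this, inv_div, div_sub_one hp1, sub_sub_cancel, one_div]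

lemma card_primeFactors_gt_mul_log_le (d y : ℕ) :
    #{p ∈ d.primeFactors | y < p} * log (y + 1) ≤ log d := by
  rcases eq_or_ne d 0 with rfl | hd
  · simp
  have hpow : (y + 1) ^ #{p ∈ d.primeFactors | y < p} ≤ d :=
    calc (y + 1) ^ #{p ∈ d.primeFactors | y < p}
        ≤ ∏ p ∈ d.primeFactors with y < p, p :=
          pow_card_le_prod _ _ _ fun p hp => (mem_filter.mp hp).2
      _ ≤ ∏ p ∈ d.primeFactors, p := prod_le_prod_of_subset_of_one_le' (filter_subset _ _)
          fun p hp _ => (Nat.prime_of_mem_primeFactors hp).one_le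
      _ ≤ d := Nat.le_of_dvd (Nat.pos_of_ne_zero hd) (Nat.prod_primeFactors_dvd d)
  rw [← log_pow]
  exact log_le_log (by positivity) (by exact_mod_cast hpow)

theorem log_div_totient_le_log_log_add_nine {d y : ℕ} (hy : 2 ≤ y) (hdy : log d ≤ y) :
    log (d / d.totient) ≤ log (log y) + 9 := by
  have hy0 : (0 : ℝ) < y := by positivity
  have hsmall : ∑ p ∈ d.primeFactors with p ≤ y, ((p : ℝ) - 1)⁻¹ ≤ log (log y) + 8 := by
    refine (sum_le_sum_of_subset_of_nonneg (fun p hp => ?_) fun p hp _ => ?_).trans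
      (sum_primesLE_inv_sub_one_le hy)
    · obtain ⟨hpd, hpy⟩ := mem_filter.mp hp
      exact Nat.mem_primesLE.mpr ⟨hpy, Nat.prime_of_mem_primeFactors hpd⟩
    · have : (2 : ℝ) ≤ p := by exact_mod_cast Nat.two_le_of_mem_primesLE hp
      exact inv_nonneg.mpr (by linarith)
  have hlarge : ∑ p ∈ d.primeFactors with ¬p ≤ y, ((p : ℝ) - 1)⁻¹ ≤ 1 := by
    have hcard : (#{p ∈ d.primeFactors | y < p} : ℝ) ≤ y := by
      have h3 : 1 < log ((y : ℝ) + 1) := by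
        have : log 3 ≤ log ((y : ℝ) + 1) :=
          log_le_log (by norm_num) (by exact_mod_cast (by omega : 3 ≤ y + 1))
        linarith [log_three_gt_d9]
      nlinarith [card_primeFactors_gt_mul_log_le d y,
        Nat.cast_nonneg (α := ℝ) #{p ∈ d.primeFactors | y < p}]
    calc ∑ p ∈ d.primeFactors with ¬p ≤ y, ((p : ℝ) - 1)⁻¹
        ≤ #{p ∈ d.primeFactors | y < p} * (y : ℝ)⁻¹ := by
          simp_rw [not_le]
          rw [← nsmul_eq_mul]
          refine sum_le_card_nsmul _ _ _ fun p hp => inv_anti₀ hy0 ?_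
          have : (y : ℝ) + 1 ≤ p := by exact_mod_cast (mem_filter.mp hp).2
          linarith
      _ ≤ 1 := by rw [← div_eq_mul_inv, div_le_one hy0]; exact hcard
  calc log (d / d.totient) ≤ ∑ p ∈ d.primeFactors, ((p : ℝ) - 1)⁻¹ :=
        log_div_totient_le_sum_primeFactors d
    _ = _ := (sum_filter_add_sum_filter_not _ (· ≤ y) _).symm
    _ ≤ log (log y) + 9 := by linarith

lemma one_div_forty_le_log_log {x : ℝ} (hx : 3 ≤ x) : 1 / 40 ≤ log (log x) := by
  have hL : 40 / 39 ≤ log x := by linarith [log_three_gt_d9, log_le_log (by norm_num) hx]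
  have := one_sub_inv_le_log_of_pos (by linarith : 0 < log x)
  have := inv_le_of_inv_le₀ (by norm_num) (by norm_num; linarith : (39 / 40 : ℝ)⁻¹ ≤ log x)
  linarith

theorem totient_ratio_le_log_log :
    ∃ C : ℝ, 0 < C ∧ ∀ d : ℕ, 3 ≤ d →
      (d : ℝ) / (Nat.totient d : ℝ) ≤ C * Real.log (Real.log d) := by
  refine ⟨41 * exp 9, by positivity, fun d hd => ?_⟩
  have hd3 : (3 : ℝ) ≤ d := by exact_mod_cast hd
  have hL : 1 < log d := by linarith [log_three_gt_d9, log_le_log (by norm_num) hd3]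
  have hlogL := one_div_forty_le_log_log hd3
  set y := ⌈log (d : ℝ)⌉₊
  have hy : 2 ≤ y := Nat.lt_ceil.mpr (by push_cast; linarith)
  have hyL : (y : ℝ) ≤ 2 * log d := by
    linarith [Nat.ceil_lt_add_one (by linarith : 0 ≤ log (d : ℝ))]
  have hlogy : 0 < log (y : ℝ) := log_pos (by exact_mod_cast hy)
  have hratio : 0 < (d : ℝ) / d.totient := by
    have := Nat.totient_pos.mpr (by omega : 0 < d)
    positivity
  calc (d : ℝ) / d.totient = exp (log (d / d.totient)) := (exp_log hratio).symm
    _ ≤ exp (log (log y) + 9) :=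
        exp_le_exp.mpr (log_div_totient_le_log_log_add_nine hy (Nat.le_ceil _))
    _ = exp 9 * log y := by rw [exp_add, exp_log hlogy, mul_comm]
    _ ≤ exp 9 * (log 2 + log (log d)) := by
        rw [← log_mul two_ne_zero (by linarith)]
        gcongr
    _ ≤ 41 * exp 9 * log (log d) := by nlinarith [log_two_lt_d9, exp_pos 9]
end
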